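/- arXiv:1211.6603 — 6 statements merged into one kernel-verified Lean document; each statement's English description precedes it below -/
import Mathlib

section
/- Let 𝔤 be a DGLA with central subcomplex 𝔞, and let μ ∈ 𝔤¹ be such that the image μ + 𝔞¹ is a Maurer-Cartan element of 𝔤/𝔞. Then F(μ) ∈ 𝔞², and δF(μ) = 0; moreover for any α ∈ 𝔞¹, F(μ + α) = F(μ) + δα, so the cohomology class o₂(μ + 𝔞¹) := [F(μ)] ∈ H²(𝔞) is well-defined, depending only on μ + 𝔞¹. -/
/-- A (ℤ-graded) differential graded Lie algebra over ℚ: a family of ℚ-modules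
`G i`, a degree-1 differential `d` with `d ∘ d = 0`, and a graded bracket
satisfying graded antisymmetry, the graded Leibniz rule and the graded Jacobi
identity. -/
structure DGLA where
  G : ℤ → Type
  [grp : ∀ i, AddCommGroup (G i)]
  [mod : ∀ i, Module ℚ (G i)]
  d : ∀ i, G i →ₗ[ℚ] G (i + 1)
  bracket : ∀ i j, G i →ₗ[ℚ] G j →ₗ[ℚ] G (i + j)
  d_sq : ∀ i (x : G i), d (i + 1) (d i x) = 0
  antisymm : ∀ i j (x : G i) (y : G j),
    bracket i j x y
      = (-((-1 : ℚ) ^ (i * j))) • cast (congrArg G (add_comm j i)) (bracket j i y x)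
  leibniz : ∀ i j (x : G i) (y : G j),
    d (i + j) (bracket i j x y)
      = cast (congrArg G (by ring : i + 1 + j = i + j + 1)) (bracket (i + 1) j (d i x) y)
        + ((-1 : ℚ) ^ i) •
          cast (congrArg G (by ring : i + (j + 1) = i + j + 1)) (bracket i (j + 1) x (d j y))
  jacobi : ∀ i j k (x : G i) (y : G j) (z : G k),
    cast (congrArg G (by ring : i + (j + k) = i + j + k)) (bracket i (j + k) x (bracket j k y z))
      = bracket (i + j) k (bracket i j x y) z
        + ((-1 : ℚ) ^ (i * j)) •
          cast (congrArg G (by ring : j + (i + k) = i + j + k)) (bracket j (i + k) y (bracket i k x z))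

attribute [instance] DGLA.grp DGLA.mod

/-- Transport along an equality of degrees. -/
def DGLA.cst (𝔤 : DGLA) {i j : ℤ} (h : i = j) (x : 𝔤.G i) : 𝔤.G j :=
  cast (congrArg 𝔤.G h) x

/-- The curvature of a degree-1 element: `F(μ) = δμ + (1/2)[μ,μ]`. -/
def DGLA.curv (𝔤 : DGLA) (μ : 𝔤.G 1) : 𝔤.G 2 :=
  𝔤.d 1 μ + (1/2 : ℚ) • 𝔤.bracket 1 1 μ μ

/-!
The Bianchi identity `δF(μ) = [F(μ), μ]` holds in every DGLA: the Leibniz rule gives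
`δ[μ,μ] = 2[δμ,μ]`, while Jacobi and antisymmetry give `3[[μ,μ],μ] = 0`, and over `ℚ` this
forces `[[μ,μ],μ] = 0`. Hence `δF(μ)` vanishes once `F(μ)` is central. Expanding `F(μ + α)`
bilinearly, all brackets involving a central `α` vanish, leaving `F(μ) + δα`.
-/

namespace DGLA

variable (𝔤 : DGLA)

theorem bracket_one_two_eq_neg (x : 𝔤.G 1) (y : 𝔤.G 2) :
    𝔤.bracket 1 2 x y = -𝔤.bracket 2 1 y x := by
  simpa using 𝔤.antisymm 1 2 x y

theorem bracket_bracket_self_self (μ : 𝔤.G 1) : 𝔤.bracket 2 1 (𝔤.bracket 1 1 μ μ) μ = 0 := by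
  set B := 𝔤.bracket 2 1 (𝔤.bracket 1 1 μ μ) μ
  have jacobi : -B = B + -(-B) := by
    have h := 𝔤.jacobi 1 1 1 μ μ μ
    simp only [cast_eq] at h
    norm_num at h
    rwa [show 𝔤.bracket 1 (1 + 1) μ (𝔤.bracket 1 1 μ μ) = _ from 𝔤.bracket_one_two_eq_neg _ _] at h
  have h3 : (3 : ℚ) • B = 0 := by
    rw [← sub_eq_zero.mpr jacobi.symm]
    module
  simpa using h3

theorem d_bracket_self (μ : 𝔤.G 1) :
    𝔤.d 2 (𝔤.bracket 1 1 μ μ) = (2 : ℚ) • 𝔤.bracket 2 1 (𝔤.d 1 μ) μ := by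
  set B := 𝔤.bracket 2 1 (𝔤.d 1 μ) μ
  have leibniz : 𝔤.d 2 (𝔤.bracket 1 1 μ μ) = B + -(-B) := by
    have h := 𝔤.leibniz 1 1 μ μ
    simp only [cast_eq] at h
    norm_num at h
    rwa [show 𝔤.bracket 1 (1 + 1) μ (𝔤.d 1 μ) = _ from 𝔤.bracket_one_two_eq_neg _ _] at h
  rw [leibniz]
  module

theorem d_curv (μ : 𝔤.G 1) : 𝔤.d 2 (𝔤.curv μ) = 𝔤.bracket 2 1 (𝔤.curv μ) μ := by
  have hdd : 𝔤.d 2 (𝔤.d 1 μ) = 0 := 𝔤.d_sq 1 μ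
  change 𝔤.d 2 (𝔤.d 1 μ + (1 / 2 : ℚ) • 𝔤.bracket 1 1 μ μ)
    = 𝔤.bracket 2 1 (𝔤.d 1 μ + (1 / 2 : ℚ) • 𝔤.bracket 1 1 μ μ) μ
  rw [map_add, map_smul, hdd, d_bracket_self, map_add, map_smul, LinearMap.add_apply,
    LinearMap.smul_apply, bracket_bracket_self_self]
  module

theorem curv_add_of_central (ν α : 𝔤.G 1) (hα : ∀ x, 𝔤.bracket 1 1 α x = 0)
    (hα' : ∀ x, 𝔤.bracket 1 1 x α = 0) :
    𝔤.curv (ν + α) = 𝔤.curv ν + 𝔤.cst (by norm_num) (𝔤.d 1 α) := by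
  simp only [curv, cst, cast_eq, map_add, LinearMap.add_apply, hα, hα', add_zero]
  abel

end DGLA

/-- **The obstruction class `o₂` is well defined.** Let `𝔞` be a central
subcomplex of a DGLA `𝔤` and let `μ ∈ 𝔤¹` be such that `μ + 𝔞¹` is
Maurer-Cartan in `𝔤/𝔞`, i.e. `F(μ) ∈ 𝔞²`.  Then `δF(μ) = 0`; moreover
`F(μ + α) = F(μ) + δα` for every `α ∈ 𝔞¹`, and for any other representative
`μ'` of the same class (`μ − μ' ∈ 𝔞¹`, `F(μ') ∈ 𝔞²`) the difference
`F(μ) − F(μ')` is a coboundary `δα`, `α ∈ 𝔞¹`; hence the class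
`o₂(μ + 𝔞¹) = [F(μ)] ∈ H²(𝔞)` is well defined. -/
theorem obstruction_class_well_defined (𝔤 : DGLA)
    (A1 : Submodule ℚ (𝔤.G 1)) (A2 : Submodule ℚ (𝔤.G 2))
    (hcentral1 : ∀ a ∈ A1, ∀ j (x : 𝔤.G j), 𝔤.bracket 1 j a x = 0)
    (hcentral1' : ∀ a ∈ A1, ∀ j (x : 𝔤.G j), 𝔤.bracket j 1 x a = 0)
    (hcentral2 : ∀ a ∈ A2, ∀ j (x : 𝔤.G j), 𝔤.bracket 2 j a x = 0)
    (μ : 𝔤.G 1) (hμ : 𝔤.curv μ ∈ A2) :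
    𝔤.d 2 (𝔤.curv μ) = 0 ∧
    (∀ α ∈ A1, 𝔤.curv (μ + α) = 𝔤.curv μ + 𝔤.cst (by norm_num) (𝔤.d 1 α)) ∧
    (∀ μ' : 𝔤.G 1, 𝔤.curv μ' ∈ A2 → μ - μ' ∈ A1 →
      ∃ α ∈ A1, 𝔤.curv μ - 𝔤.curv μ' = 𝔤.cst (by norm_num) (𝔤.d 1 α)) := by
  have curv_add : ∀ ν, ∀ α ∈ A1, 𝔤.curv (ν + α) = 𝔤.curv ν + 𝔤.cst (by norm_num) (𝔤.d 1 α) :=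
    fun ν α hα => 𝔤.curv_add_of_central ν α (hcentral1 α hα 1) (hcentral1' α hα 1)
  refine ⟨?_, curv_add μ, fun μ' _ hdiff => ⟨μ - μ', hdiff, ?_⟩⟩
  · rw [𝔤.d_curv, hcentral2 _ hμ 1 μ]
  · rw [sub_eq_iff_eq_add', ← curv_add μ' _ hdiff, add_sub_cancel]
end

section
/- Let 𝔤 be a DGLA with central subcomplex 𝔞. The sequence of pointed sets 0 → MC(𝔤)/MC(𝔞) → MC(𝔤/𝔞) → H²(𝔞) is exact: the map MC(𝔤) → MC(𝔤/𝔞) induces an injection MC(𝔤)/MC(𝔞) → MC(𝔤/𝔞) whose image is exactly the preimage of 0 under the obstruction map o₂: MC(𝔤/𝔞) → H²(𝔞). -/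
/-!
A central element `a` of degree 1 brackets to zero on both sides (on the right by graded
antisymmetry), so `F(μ + a) = F(μ) + δa`. Hence two Maurer–Cartan elements differing by
`a ∈ 𝔞¹` force `δa = 0`, and `F(μ + α) = 0` exactly when `F(μ) = δ(-α)`.
-/

section

variable (𝔤 : DGLA)

def DGLA.IsCentral {i : ℤ} (a : 𝔤.G i) : Prop :=
  ∀ j (x : 𝔤.G j), 𝔤.bracket i j a x = 0

theorem DGLA.cst_zero {i j : ℤ} (h : i = j) : 𝔤.cst h 0 = 0 := by
  subst h
  rfl

theorem DGLA.cst_self {i : ℤ} (h : i = i) (x : 𝔤.G i) : 𝔤.cst h x = x :=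
  cast_eq _ x

variable {𝔤}

theorem DGLA.IsCentral.bracket_right_eq_zero {i : ℤ} {a : 𝔤.G i} (ha : 𝔤.IsCentral a)
    (j : ℤ) (x : 𝔤.G j) : 𝔤.bracket j i x a = 0 := by
  rw [𝔤.antisymm, ha j x]
  exact (congrArg _ (𝔤.cst_zero (add_comm i j))).trans (smul_zero _)

theorem DGLA.curv_add_of_isCentral (μ : 𝔤.G 1) {a : 𝔤.G 1} (ha : 𝔤.IsCentral a) :
    𝔤.curv (μ + a) = 𝔤.curv μ + 𝔤.cst (by norm_num) (𝔤.d 1 a) := by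
  have hbracket : 𝔤.bracket 1 1 (μ + a) (μ + a) = 𝔤.bracket 1 1 μ μ := by
    rw [LinearMap.map_add₂, map_add, map_add, ha 1 μ, ha 1 a, ha.bracket_right_eq_zero 1 μ]
    abel
  rw [DGLA.cst_self, DGLA.curv, DGLA.curv, map_add, hbracket]
  abel

end

/-- **Exactness of `0 → MC(𝔤)/MC(𝔞) → MC(𝔤/𝔞) → H²(𝔞)`.** Let `𝔞` be a central
subcomplex of a DGLA `𝔤`.  (a) Injectivity of `MC(𝔤)/MC(𝔞) → MC(𝔤/𝔞)`: two
Maurer-Cartan elements of `𝔤` with the same image in `𝔤/𝔞` differ by an element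
of `MC(𝔞) = Z¹(𝔞)`.  (b) A Maurer-Cartan element `μ + 𝔞¹` of `𝔤/𝔞` (i.e.
`F(μ) ∈ 𝔞²`) lifts to a Maurer-Cartan element of `𝔤` if and only if its
obstruction class `o₂ = [F(μ)] ∈ H²(𝔞)` vanishes, i.e. `F(μ)` is a coboundary
`δα` with `α ∈ 𝔞¹`. -/
theorem MC_central_extension_exact (𝔤 : DGLA)
    (A1 : Submodule ℚ (𝔤.G 1)) (A2 : Submodule ℚ (𝔤.G 2))
    (hcentral1 : ∀ a ∈ A1, ∀ j (x : 𝔤.G j), 𝔤.bracket 1 j a x = 0) :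
    (∀ μ μ' : 𝔤.G 1, 𝔤.curv μ = 0 → 𝔤.curv μ' = 0 → μ - μ' ∈ A1 →
      𝔤.d 1 (μ - μ') = 0) ∧
    (∀ μ : 𝔤.G 1, 𝔤.curv μ ∈ A2 →
      ((∃ α ∈ A1, 𝔤.curv (μ + α) = 0) ↔
        (∃ α ∈ A1, 𝔤.curv μ = 𝔤.cst (by norm_num) (𝔤.d 1 α)))) := by
  have hcurv : ∀ μ, ∀ α ∈ A1, 𝔤.curv (μ + α) = 𝔤.curv μ + 𝔤.cst (by norm_num) (𝔤.d 1 α) :=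
    fun μ α hα => DGLA.curv_add_of_isCentral μ (hcentral1 α hα)
  simp only [DGLA.cst_self] at hcurv ⊢
  refine ⟨fun μ μ' hμ hμ' hmem => ?_, fun μ _ => ⟨?_, ?_⟩⟩
  · have h := hcurv μ' (μ - μ') hmem
    rwa [add_sub_cancel, hμ, hμ', zero_add, eq_comm] at h
  · rintro ⟨α, hα, hμα⟩
    refine ⟨-α, neg_mem hα, ?_⟩
    rw [map_neg, eq_neg_of_add_eq_zero_left ((hcurv μ α hα).symm.trans hμα)]
  · rintro ⟨α, hα, hμ⟩
    refine ⟨-α, neg_mem hα, ?_⟩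
    rw [hcurv μ (-α) (neg_mem hα), hμ, map_neg, add_neg_cancel]
end

section
/- (Duflo's lemma / derivative of exponential) Let L be a nilpotent Lie algebra over a field of characteristic 0, D a derivation of L, u ∈ L. Then (D(exp u))(exp u)⁻¹ = ((e^{ad(u)} − 1)/ad(u))(D(u)), where (e^{ad(u)} − 1)/ad(u) = Σ_{k≥0} ad(u)^k/(k+1)! (a finite sum by nilpotency). -/
attribute [local instance 100] LieRing.ofAssociativeRing

/-- The (truncated) exponential `Σ_{k<n} u^k / k!` of a nilpotent element of an
associative ℚ-algebra; when `u ^ n = 0` this is the exponential `exp u`. -/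
noncomputable def nilExp (A : Type) [Ring A] [Algebra ℚ A] (n : ℕ) (u : A) : A :=
  ∑ k ∈ Finset.range n, ((Nat.factorial k : ℚ))⁻¹ • u ^ k

/-!
Writing left multiplication by `u` as `ad u + R_u` with commuting summands gives
`u ^ k * w = Σ_{i+j=k} C(k,i) ad(u)^i(w) u^j`, and from it by induction
`D(u^(k+1)) = Σ_{i+j=k} C(k+1,i+1) ad(u)^i(Du) u^j`. After division by `(k+1)!` the coefficient
factorises as `1/(i+1)! · 1/j!`, so `D(exp u)` is the Cauchy product of
`Σ ad(u)^i(Du)/(i+1)!` with `exp u`.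
-/

open Finset LieAlgebra

theorem Finset.sum_range_sum_antidiagonal_eq_sum_range_sum_range {M : Type*} [AddCommMonoid M]
    (g : ℕ → ℕ → M) {m n : ℕ} (hg : ∀ i j, g i j ≠ 0 → i < m ∧ j < n) :
    ∑ k ∈ range (m + n), ∑ ij ∈ antidiagonal k, g ij.1 ij.2
      = ∑ i ∈ range m, ∑ j ∈ range n, g i j := by
  rw [sum_sigma', ← sum_product']
  refine sum_bij_ne_zero (fun x _ _ ↦ x.2) ?_ ?_ ?_ (fun _ _ _ ↦ rfl)
  · rintro ⟨k, i, j⟩ - hne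
    simpa using hg i j hne
  · rintro ⟨k, i, j⟩ hk - ⟨k', i', j'⟩ hk' - h
    simp only [mem_sigma, HasAntidiagonal.mem_antidiagonal] at hk hk'
    obtain ⟨rfl, rfl⟩ := Prod.mk.inj h
    rw [← hk.2, ← hk'.2]
  · rintro ⟨i, j⟩ - hne
    obtain ⟨hi, hj⟩ := hg i j hne
    have hk : i + j ∈ range (m + n) := mem_range.mpr (by omega)
    exact ⟨⟨i + j, i, j⟩, mem_sigma.mpr ⟨hk, HasAntidiagonal.mem_antidiagonal.mpr rfl⟩, hne, rfl⟩

section Associative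

variable {R A : Type*} [CommRing R] [Ring A] [Algebra R A]

theorem pow_mul_eq_sum_ad_pow_mul (u w : A) (k : ℕ) :
    u ^ k * w = ∑ ij ∈ antidiagonal k, k.choose ij.1 • ((ad R A u ^ ij.1) w * u ^ ij.2) := by
  have hsplit : LinearMap.mulLeft R u = ad R A u + LinearMap.mulRight R u := by
    rw [ad_eq_lmul_left_sub_lmul_right, Pi.sub_apply, sub_add_cancel]
  have hcomm : Commute (ad R A u) (LinearMap.mulRight R u) := by
    rw [ad_eq_lmul_left_sub_lmul_right, Pi.sub_apply]
    exact (LinearMap.commute_mulLeft_right u u).sub_left (Commute.refl _)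
  rw [← LinearMap.mulLeft_apply (R := R), ← LinearMap.pow_mulLeft, hsplit, hcomm.add_pow',
    LinearMap.sum_apply]
  refine sum_congr rfl fun ij _ ↦ ?_
  rw [LinearMap.smul_apply, (hcomm.pow_pow ij.1 ij.2).eq, Module.End.mul_apply,
    LinearMap.pow_mulRight, LinearMap.mulRight_apply]

theorem apply_pow_succ_eq_sum_ad_pow_mul (D : A → A) (hD : ∀ a b, D (a * b) = D a * b + a * D b)
    (u : A) (k : ℕ) :
    D (u ^ (k + 1)) =
      ∑ ij ∈ antidiagonal k, (k + 1).choose (ij.1 + 1) • ((ad R A u ^ ij.1) (D u) * u ^ ij.2) := by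
  induction k with
  | zero => simp
  | succ k ih =>
    rw [pow_succ, hD, ih, pow_mul_eq_sum_ad_pow_mul (R := R), Nat.sum_antidiagonal_succ',
      Nat.sum_antidiagonal_succ', sum_mul]
    simp only [Nat.choose_succ_succ' (k + 1), add_smul, sum_add_distrib, smul_mul_assoc, mul_assoc,
      ← pow_succ]
    simp only [Nat.choose_self, Nat.choose_succ_self]
    abel

end Associative

theorem Nat.inv_factorial_mul_choose {K : Type*} [Field K] [CharZero K] (i j : ℕ) :
    ((i + j + 1).factorial : K)⁻¹ * (i + j + 1).choose (i + 1)
      = ((i + 1).factorial : K)⁻¹ * (j.factorial : K)⁻¹ := by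
  rw [show i + j + 1 = i + 1 + j by ring, Nat.cast_add_choose, div_eq_mul_inv,
    inv_mul_cancel_left₀ (Nat.cast_ne_zero.mpr (Nat.factorial_ne_zero _)), mul_inv]

section NilExp

variable {A : Type} [Ring A] [Algebra ℚ A]

theorem nilExp_eq_exp {n : ℕ} {u : A} (hun : u ^ n = 0) : nilExp A n u = IsNilpotent.exp u :=
  (IsNilpotent.exp_eq_sum hun).symm

theorem map_nilExp_eq_sum_ad_pow_mul_nilExp (D : A →ₗ[ℚ] A)
    (hD : ∀ a b : A, D (a * b) = D a * b + a * D b) {u : A} {n N : ℕ} (hun : u ^ n = 0)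
    (hN : ad ℚ A u ^ N = 0) :
    D (nilExp A n u)
      = (∑ k ∈ range N, ((k + 1).factorial : ℚ)⁻¹ • (ad ℚ A u ^ k) (D u)) * nilExp A n u := by
  have hD1 : D 1 = 0 := by simpa using hD 1 1
  -- truncate late enough that every pair `i < N`, `j < n` has `i + j < N + n`
  have hexp : nilExp A n u = nilExp A (N + n + 1) u := by
    rw [nilExp_eq_exp hun, nilExp_eq_exp (pow_eq_zero_of_le (by omega) hun)]
  have hvanish : ∀ i j, ((i + 1).factorial : ℚ)⁻¹ • (ad ℚ A u ^ i) (D u)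
      * ((j.factorial : ℚ)⁻¹ • u ^ j) ≠ 0 → i < N ∧ j < n := by
    intro i j hne
    by_contra! hij
    rcases Nat.lt_or_ge i N with hi | hi
    · simp [pow_eq_zero_of_le (hij hi) hun] at hne
    · simp [pow_eq_zero_of_le hi hN] at hne
  calc D (nilExp A n u)
      = ∑ k ∈ range (N + n), ((k + 1).factorial : ℚ)⁻¹ • D (u ^ (k + 1)) := by
        rw [hexp, nilExp, map_sum, sum_range_succ']
        simp [hD1]
    _ = ∑ k ∈ range (N + n), ∑ ij ∈ antidiagonal k, ((ij.1 + 1).factorial : ℚ)⁻¹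
          • (ad ℚ A u ^ ij.1) (D u) * ((ij.2.factorial : ℚ)⁻¹ • u ^ ij.2) := by
        refine sum_congr rfl fun k _ ↦ ?_
        rw [apply_pow_succ_eq_sum_ad_pow_mul (R := ℚ) D hD, smul_sum]
        refine sum_congr rfl fun ⟨i, j⟩ hij ↦ ?_
        rw [HasAntidiagonal.mem_antidiagonal] at hij
        subst hij
        rw [smul_mul_smul_comm, ← Nat.cast_smul_eq_nsmul ℚ, smul_smul,
          Nat.inv_factorial_mul_choose]
    _ = ∑ i ∈ range N, ∑ j ∈ range n, ((i + 1).factorial : ℚ)⁻¹ • (ad ℚ A u ^ i) (D u)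
          * ((j.factorial : ℚ)⁻¹ • u ^ j) :=
        sum_range_sum_antidiagonal_eq_sum_range_sum_range _ hvanish
    _ = _ := by rw [nilExp, sum_mul_sum]

end NilExp

theorem log_derivative_of_exponential_general
    (A : Type) [Ring A] [Algebra ℚ A]
    (D : A →ₗ[ℚ] A) (hD : ∀ a b : A, D (a * b) = D a * b + a * D b)
    (σ : Aˣ) (u : A)
    (n : ℕ) (hun : u ^ n = 0)
    (hσ : (σ : A) = nilExp A n u)
    (N : ℕ) (hN : (LieAlgebra.ad ℚ A u) ^ N = 0) :
    D ↑σ * ↑σ⁻¹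
      = ∑ k ∈ Finset.range N,
          ((Nat.factorial (k + 1) : ℚ))⁻¹ • ((LieAlgebra.ad ℚ A u) ^ k) (D u) := by
  rw [hσ, map_nilExp_eq_sum_ad_pow_mul_nilExp D hD hun hN, ← hσ, Units.mul_inv_cancel_right]

/-- **Duflo's lemma: the logarithmic derivative of an exponential.** With `L` a
nilpotent Lie algebra (realized inside an associative ℚ-algebra), `D` a
derivation preserving `L`, and `u ∈ L` nilpotent:
`(D(exp u))(exp u)⁻¹ = ((e^{ad u} − 1)/ad u)(Du) = Σ_{k} ad(u)^k/(k+1)! (Du)`,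
the sum being finite since `ad u` is nilpotent. -/
theorem log_derivative_of_exponential
    (A : Type) [Ring A] [Algebra ℚ A]
    (L : LieSubalgebra ℚ A)
    (hnilL : ∀ x ∈ L, IsNilpotent x)
    (D : A →ₗ[ℚ] A) (hD : ∀ a b : A, D (a * b) = D a * b + a * D b)
    (hDL : ∀ x ∈ L, D x ∈ L)
    (σ : Aˣ) (u : A) (hu : u ∈ L)
    (n : ℕ) (hun : u ^ n = 0)
    (hσ : (σ : A) = nilExp A n u)
    (N : ℕ) (hN : (LieAlgebra.ad ℚ A u) ^ N = 0) :
    D ↑σ * ↑σ⁻¹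
      = ∑ k ∈ Finset.range N,
          ((Nat.factorial (k + 1) : ℚ))⁻¹ • ((LieAlgebra.ad ℚ A u) ^ k) (D u) :=
  log_derivative_of_exponential_general A D hD σ u n hun hσ N hN
end

section
/- Let 𝔥 be a nilpotent DGLA with 𝔥^i = 0 for i ≤ −2, and let γ ∈ MC(𝔥). Define a new bracket on 𝔥^{−1} by [a,b]_γ = [a, δb + [γ,b]]. Then (𝔥^{−1}, [·,·]_γ) is a Lie algebra: the bracket is antisymmetric and satisfies the Jacobi identity. -/
/-- The bracket `[a,b]_γ = [a, δb + [γ,b]]` on `𝔥⁻¹` determined by a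
Maurer-Cartan element `γ`. -/
def DGLA.gammaBracket (𝔥 : DGLA) (γ : 𝔥.G 1) (a b : 𝔥.G (-1)) : 𝔥.G (-1) :=
  𝔥.cst (by norm_num)
    (𝔥.bracket (-1) 0 a
      (𝔥.cst (by norm_num) (𝔥.d (-1) b) + 𝔥.cst (by norm_num) (𝔥.bracket 1 (-1) γ b)))


/-!
The twisted differential `δ_γ = δ + [γ, -]` is a derivation of the bracket whose square is
`[F(γ), -] = 0`. Since `[𝔥⁻¹, 𝔥⁻¹] = 0`, the Leibniz rule and the Jacobi identity give
`[a, δ_γ b] = [δ_γ a, b]`, which is the antisymmetry of `[-,-]_γ`. Moreover `δ_γ` carries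
`[a, b]_γ` to the degree-0 bracket `[δ_γ a, δ_γ b]`, so the Jacobi identity in degree 0 acting on
`𝔥⁻¹` becomes the Leibniz rule for `[-,-]_γ`; together with antisymmetry this is the Jacobi identity.
-/

theorem LinearMap.jacobi_of_anticomm_of_leibniz {R M : Type*} [CommSemiring R] [AddCommGroup M]
    [Module R M] (B : M →ₗ[R] M →ₗ[R] M) (h_anti : ∀ a b, B a b = -B b a)
    (h_leib : ∀ a b c, B (B a b) c = B a (B b c) - B b (B a c)) (a b c : M) :
    B (B a b) c + B (B b c) a + B (B c a) b = 0 := by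
  rw [h_leib, h_anti (B b c) a, h_anti (B c a) b, h_anti c a, map_neg]
  abel

namespace DGLA

variable (𝔥 : DGLA)

/- The structure maps at fixed degrees, typed with normalised degrees (`𝔥.G (-1)` rather than
`𝔥.G (-1 + 0)`), so that rewriting and `abel` see a single type per degree. Subscripts are the
degrees of the arguments, `ₘ` standing for `-1`. -/
def brₘ₀ : 𝔥.G (-1) →ₗ[ℚ] 𝔥.G 0 →ₗ[ℚ] 𝔥.G (-1) := 𝔥.bracket (-1) 0
def br₀ₘ : 𝔥.G 0 →ₗ[ℚ] 𝔥.G (-1) →ₗ[ℚ] 𝔥.G (-1) := 𝔥.bracket 0 (-1)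
def br₀₀ : 𝔥.G 0 →ₗ[ℚ] 𝔥.G 0 →ₗ[ℚ] 𝔥.G 0 := 𝔥.bracket 0 0
def brₘ₁ : 𝔥.G (-1) →ₗ[ℚ] 𝔥.G 1 →ₗ[ℚ] 𝔥.G 0 := 𝔥.bracket (-1) 1
def br₂ₘ : 𝔥.G 2 →ₗ[ℚ] 𝔥.G (-1) →ₗ[ℚ] 𝔥.G 1 := 𝔥.bracket 2 (-1)
def br₁ₘ : 𝔥.G 1 →ₗ[ℚ] 𝔥.G (-1) →ₗ[ℚ] 𝔥.G 0 := 𝔥.bracket 1 (-1)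
def br₁₀ : 𝔥.G 1 →ₗ[ℚ] 𝔥.G 0 →ₗ[ℚ] 𝔥.G 1 := 𝔥.bracket 1 0
def dₘ : 𝔥.G (-1) →ₗ[ℚ] 𝔥.G 0 := 𝔥.d (-1)
def d₀ : 𝔥.G 0 →ₗ[ℚ] 𝔥.G 1 := 𝔥.d 0

def twistedDiffₘ (γ : 𝔥.G 1) : 𝔥.G (-1) →ₗ[ℚ] 𝔥.G 0 := 𝔥.dₘ + 𝔥.br₁ₘ γ
def twistedDiff₀ (γ : 𝔥.G 1) : 𝔥.G 0 →ₗ[ℚ] 𝔥.G 1 := 𝔥.d₀ + 𝔥.br₁₀ γ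

theorem gammaBracket_eq (γ : 𝔥.G 1) (a b : 𝔥.G (-1)) :
    𝔥.gammaBracket γ a b = 𝔥.brₘ₀ a (𝔥.twistedDiffₘ γ b) := rfl

theorem br₀ₘ_eq_neg (x : 𝔥.G 0) (a : 𝔥.G (-1)) : 𝔥.br₀ₘ x a = -𝔥.brₘ₀ a x := by
  have h : 𝔥.br₀ₘ x a = (-(-1 : ℚ) ^ ((0 : ℤ) * -1)) • 𝔥.brₘ₀ a x := 𝔥.antisymm 0 (-1) x a
  simpa using h

theorem br₀ₘ_br₀₀ (x y : 𝔥.G 0) (a : 𝔥.G (-1)) :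
    𝔥.br₀ₘ (𝔥.br₀₀ x y) a = 𝔥.br₀ₘ x (𝔥.br₀ₘ y a) - 𝔥.br₀ₘ y (𝔥.br₀ₘ x a) := by
  have h : 𝔥.br₀ₘ x (𝔥.br₀ₘ y a)
      = 𝔥.br₀ₘ (𝔥.br₀₀ x y) a + (-1 : ℚ) ^ ((0 : ℤ) * 0) • 𝔥.br₀ₘ y (𝔥.br₀ₘ x a) :=
    𝔥.jacobi 0 0 (-1) x y a
  simp [h]

theorem brₘ₀_twistedDiffₘ_of_bracket_eq_zero (γ : 𝔥.G 1) {a b : 𝔥.G (-1)}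
    (hab : 𝔥.bracket (-1) (-1) a b = 0) :
    𝔥.brₘ₀ a (𝔥.twistedDiffₘ γ b) = 𝔥.br₀ₘ (𝔥.twistedDiffₘ γ a) b := by
  have hleib : 𝔥.d (-1 + -1) (𝔥.bracket (-1) (-1) a b)
      = 𝔥.br₀ₘ (𝔥.dₘ a) b + (-1 : ℚ) ^ (-1 : ℤ) • 𝔥.brₘ₀ a (𝔥.dₘ b) :=
    𝔥.leibniz (-1) (-1) a b
  have hjac : (𝔥.bracket 1 (-1 + -1) γ (𝔥.bracket (-1) (-1) a b) : 𝔥.G (-1))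
      = 𝔥.br₀ₘ (𝔥.br₁ₘ γ a) b
        + (-1 : ℚ) ^ ((1 : ℤ) * -1) • 𝔥.brₘ₀ a (𝔥.br₁ₘ γ b) :=
    𝔥.jacobi 1 (-1) (-1) γ a b
  norm_num [hab] at hleib hjac
  simp only [twistedDiffₘ, LinearMap.add_apply, map_add]
  linear_combination (norm := module) hleib + hjac

theorem twistedDiffₘ_brₘ₀ (γ : 𝔥.G 1) (a : 𝔥.G (-1)) (x : 𝔥.G 0) :
    𝔥.twistedDiffₘ γ (𝔥.brₘ₀ a x)
      = 𝔥.br₀₀ (𝔥.twistedDiffₘ γ a) x - 𝔥.brₘ₁ a (𝔥.twistedDiff₀ γ x) := by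
  have hleib : 𝔥.dₘ (𝔥.brₘ₀ a x) = 𝔥.br₀₀ (𝔥.dₘ a) x + (-1 : ℚ) ^ (-1 : ℤ) • 𝔥.brₘ₁ a (𝔥.d₀ x) :=
    𝔥.leibniz (-1) 0 a x
  have hjac : 𝔥.br₁ₘ γ (𝔥.brₘ₀ a x)
      = 𝔥.br₀₀ (𝔥.br₁ₘ γ a) x + (-1 : ℚ) ^ ((1 : ℤ) * -1) • 𝔥.brₘ₁ a (𝔥.br₁₀ γ x) :=
    𝔥.jacobi 1 (-1) 0 γ a x
  norm_num at hleib hjac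
  simp only [twistedDiffₘ, twistedDiff₀, LinearMap.add_apply, map_add, hleib, hjac]
  abel

theorem twistedDiff₀_twistedDiffₘ (γ : 𝔥.G 1) (b : 𝔥.G (-1)) :
    𝔥.twistedDiff₀ γ (𝔥.twistedDiffₘ γ b) = 𝔥.br₂ₘ (𝔥.curv γ) b := by
  have hdd : 𝔥.d₀ (𝔥.dₘ b) = 0 := 𝔥.d_sq (-1) b
  have hleib : 𝔥.d₀ (𝔥.br₁ₘ γ b) = 𝔥.br₂ₘ (𝔥.d 1 γ) b + (-1 : ℚ) ^ (1 : ℤ) • 𝔥.br₁₀ γ (𝔥.dₘ b) :=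
    𝔥.leibniz 1 (-1) γ b
  have hjac : 𝔥.br₁₀ γ (𝔥.br₁ₘ γ b)
      = 𝔥.br₂ₘ (𝔥.bracket 1 1 γ γ) b + (-1 : ℚ) ^ ((1 : ℤ) * 1) • 𝔥.br₁₀ γ (𝔥.br₁ₘ γ b) :=
    𝔥.jacobi 1 1 (-1) γ γ b
  norm_num at hleib hjac
  simp only [twistedDiffₘ, twistedDiff₀, curv, LinearMap.add_apply, map_add, map_smul,
    LinearMap.smul_apply, hdd, hleib]
  -- `hjac` says `2 [γ, [γ, b]] = [[γ, γ], b]`, which absorbs the `1/2` of the curvature.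
  linear_combination (norm := module) (1 / 2 : ℚ) • hjac

variable {𝔥} {γ : 𝔥.G 1}

theorem gammaBracket_eq_br₀ₘ (hbr : ∀ a b : 𝔥.G (-1), 𝔥.bracket (-1) (-1) a b = 0)
    (a b : 𝔥.G (-1)) : 𝔥.gammaBracket γ a b = 𝔥.br₀ₘ (𝔥.twistedDiffₘ γ a) b :=
  𝔥.brₘ₀_twistedDiffₘ_of_bracket_eq_zero γ (hbr a b)

theorem gammaBracket_anticomm (hbr : ∀ a b : 𝔥.G (-1), 𝔥.bracket (-1) (-1) a b = 0)
    (a b : 𝔥.G (-1)) : 𝔥.gammaBracket γ a b = -𝔥.gammaBracket γ b a := by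
  rw [gammaBracket_eq_br₀ₘ hbr, br₀ₘ_eq_neg, gammaBracket_eq]

theorem twistedDiffₘ_gammaBracket (hγ : 𝔥.curv γ = 0) (a b : 𝔥.G (-1)) :
    𝔥.twistedDiffₘ γ (𝔥.gammaBracket γ a b)
      = 𝔥.br₀₀ (𝔥.twistedDiffₘ γ a) (𝔥.twistedDiffₘ γ b) := by
  rw [gammaBracket_eq, twistedDiffₘ_brₘ₀, twistedDiff₀_twistedDiffₘ, hγ, map_zero,
    LinearMap.zero_apply, map_zero, sub_zero]

theorem gammaBracket_leibniz (hbr : ∀ a b : 𝔥.G (-1), 𝔥.bracket (-1) (-1) a b = 0)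
    (hγ : 𝔥.curv γ = 0) (a b c : 𝔥.G (-1)) :
    𝔥.gammaBracket γ (𝔥.gammaBracket γ a b) c
      = 𝔥.gammaBracket γ a (𝔥.gammaBracket γ b c)
        - 𝔥.gammaBracket γ b (𝔥.gammaBracket γ a c) := by
  rw [gammaBracket_eq_br₀ₘ hbr, twistedDiffₘ_gammaBracket hγ, br₀ₘ_br₀₀,
    ← gammaBracket_eq_br₀ₘ hbr b c, ← gammaBracket_eq_br₀ₘ hbr a c,
    ← gammaBracket_eq_br₀ₘ hbr a, ← gammaBracket_eq_br₀ₘ hbr b]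

end DGLA

/-- **The Getzler bracket on `𝔥⁻¹` is a Lie bracket.** Let `𝔥` be a DGLA with
`𝔥^i = 0` for `i ≤ −2`, and let `γ ∈ MC(𝔥)`.  Then
`[a,b]_γ = [a, δb + [γ,b]]` is antisymmetric and satisfies the Jacobi
identity, so `(𝔥⁻¹, [·,·]_γ)` is a Lie algebra. -/
theorem gammaBracket_is_lie (𝔥 : DGLA)
    (hvanish : ∀ i : ℤ, i ≤ -2 → ∀ x : 𝔥.G i, x = 0)
    (γ : 𝔥.G 1) (hγ : 𝔥.curv γ = 0) :
    (∀ a b : 𝔥.G (-1), 𝔥.gammaBracket γ a b = - 𝔥.gammaBracket γ b a) ∧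
    (∀ a b c : 𝔥.G (-1),
      𝔥.gammaBracket γ (𝔥.gammaBracket γ a b) c
        + 𝔥.gammaBracket γ (𝔥.gammaBracket γ b c) a
        + 𝔥.gammaBracket γ (𝔥.gammaBracket γ c a) b = 0) := by
  have hbr : ∀ a b : 𝔥.G (-1), 𝔥.bracket (-1) (-1) a b = 0 :=
    fun a b => hvanish _ (by norm_num) _
  exact ⟨DGLA.gammaBracket_anticomm hbr,
    (𝔥.brₘ₀.compl₂ (𝔥.twistedDiffₘ γ)).jacobi_of_anticomm_of_leibniz
      (DGLA.gammaBracket_anticomm hbr) (DGLA.gammaBracket_leibniz hbr hγ)⟩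
end

section
/- Let 𝔥 be a DGLA, γ₁, γ₂ ∈ MC(𝔥), and X ∈ 𝔥⁰ nilpotent (e.g. 𝔥 nilpotent) such that γ₂ = (exp X)·γ₁ where the gauge action is (exp X)·γ = γ − Σ_{i≥0} (ad X)^i/(i+1)! (δX + [γ, X]). Then d + ad(γ₂) = Ad(exp X) ∘ (d + ad(γ₁)) ∘ Ad(exp X)⁻¹, i.e. δ + ad(γ₂) = e^{ad X} ∘ (δ + ad(γ₁)) ∘ e^{−ad X} as operators on 𝔥. -/
/-- Iterated adjoint action `(ad X)^n` of a degree-0 element on `𝔤^k`. -/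
def DGLA.adpow (𝔤 : DGLA) (X : 𝔤.G 0) : ℕ → ∀ k : ℤ, 𝔤.G k → 𝔤.G k
  | 0, _, y => y
  | n + 1, k, y => 𝔤.cst (zero_add k) (𝔤.bracket 0 k X (𝔤.adpow X n k y))

/-- The twisted differential `δ + ad(γ) : 𝔤^k → 𝔤^{k+1}`. -/
def DGLA.opGamma (𝔤 : DGLA) (γ : 𝔤.G 1) (k : ℤ) (y : 𝔤.G k) : 𝔤.G (k + 1) :=
  𝔤.d k y + 𝔤.cst (add_comm 1 k) (𝔤.bracket 1 k γ y)

/-- The gauge action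
`(exp X)·γ = γ − Σ_{i} (ad X)^i/(i+1)! (δX + [γ,X])` (the series truncated at
`N`, which suffices when `(ad X)^N = 0`). -/
def DGLA.gaugeAct (𝔤 : DGLA) (N : ℕ) (X : 𝔤.G 0) (γ : 𝔤.G 1) : 𝔤.G 1 :=
  γ - ∑ i ∈ Finset.range N, ((Nat.factorial (i + 1) : ℚ))⁻¹ •
      𝔤.adpow X i 1 (𝔤.cst (by norm_num) (𝔤.d 0 X) + 𝔤.cst (by norm_num) (𝔤.bracket 1 0 γ X))

/-- `e^{ad X} = Σ_i (ad X)^i / i!` on `𝔤^k` (truncated at `N`). -/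
def DGLA.expAd (𝔤 : DGLA) (N : ℕ) (X : 𝔤.G 0) (k : ℤ) (y : 𝔤.G k) : 𝔤.G k :=
  ∑ i ∈ Finset.range N, ((Nat.factorial i : ℚ))⁻¹ • 𝔤.adpow X i k y

/-!
Put `A = ad X` on `𝔤ᵏ` and `B = ad X` on `𝔤ᵏ⁺¹`. For nilpotent `A`, `B` and any linear
`T : V → W`, `e^B ∘ T ∘ e^{-A} = exp(𝒜) T` with `𝒜 T = B ∘ T - T ∘ A`, because `𝒜` is the sum of
the commuting nilpotent operators `T ↦ B ∘ T` and `T ↦ -T ∘ A`. For `T = δ + ad γ` the Leibniz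
rule and antisymmetry give `𝒜 T = -ad (δX + [γ, X])`, and the Jacobi identity gives
`𝒜 (ad Q) = ad [X, Q]`; hence `𝒜^{i+1} T = -ad ((ad X)^i (δX + [γ, X]))`, and the exponential
series of `𝒜` applied to `δ + ad γ₁` is term by term `δ + ad ((exp X)·γ₁)`.
-/

open IsNilpotent

theorem IsNilpotent.map_exp_of_map_pow {R S : Type*} [Ring R] [Module ℚ R] [Ring S]
    [Module ℚ S] (Φ : R →ₗ[ℚ] S) {a : R} (hΦ : ∀ n : ℕ, Φ (a ^ n) = Φ a ^ n)
    (ha : IsNilpotent a) : Φ (exp a) = exp (Φ a) := by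
  obtain ⟨n, hn⟩ := ha
  rw [exp_eq_sum hn, exp_eq_sum (k := n) (by rw [← hΦ, hn, map_zero]), map_sum]
  simp only [map_smul, hΦ]

namespace LinearMap

variable (V W : Type*) [AddCommGroup V] [Module ℚ V] [AddCommGroup W] [Module ℚ W]

def postcomp : Module.End ℚ W →ₗ[ℚ] Module.End ℚ (V →ₗ[ℚ] W) :=
  llcomp ℚ V W W

def precomp : Module.End ℚ V →ₗ[ℚ] Module.End ℚ (V →ₗ[ℚ] W) :=
  (llcomp ℚ V V W).flip

variable {V W}

theorem postcomp_pow (B : Module.End ℚ W) (n : ℕ) :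
    postcomp V W (B ^ n) = postcomp V W B ^ n := by
  induction n with
  | zero => rfl
  | succ n ih => rw [_root_.pow_succ, _root_.pow_succ, ← ih]; rfl

theorem precomp_pow (A : Module.End ℚ V) (n : ℕ) :
    precomp V W (A ^ n) = precomp V W A ^ n := by
  induction n with
  | zero => rfl
  | succ n ih => rw [_root_.pow_succ, pow_succ', ← ih]; rfl

theorem commute_postcomp_precomp (A : Module.End ℚ V) (B : Module.End ℚ W) :
    Commute (postcomp V W B) (precomp V W A) :=
  rfl

theorem isNilpotent_postcomp {B : Module.End ℚ W} (hB : IsNilpotent B) :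
    IsNilpotent (postcomp V W B) := by
  obtain ⟨n, hn⟩ := hB
  exact ⟨n, by rw [← postcomp_pow, hn, map_zero]⟩

theorem isNilpotent_precomp {A : Module.End ℚ V} (hA : IsNilpotent A) :
    IsNilpotent (precomp V W A) := by
  obtain ⟨n, hn⟩ := hA
  exact ⟨n, by rw [← precomp_pow, hn, map_zero]⟩

/-- The adjoint action of `A ⊕ B` on `Hom(V, W)`. -/
def relAd (A : Module.End ℚ V) (B : Module.End ℚ W) : Module.End ℚ (V →ₗ[ℚ] W) :=
  postcomp V W B - precomp V W A

theorem relAd_apply (A : Module.End ℚ V) (B : Module.End ℚ W) (T : V →ₗ[ℚ] W) :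
    relAd A B T = B ∘ₗ T - T ∘ₗ A :=
  rfl

theorem isNilpotent_relAd {A : Module.End ℚ V} {B : Module.End ℚ W} (hA : IsNilpotent A)
    (hB : IsNilpotent B) : IsNilpotent (relAd A B) :=
  (commute_postcomp_precomp A B).isNilpotent_sub (isNilpotent_postcomp hB)
    (isNilpotent_precomp hA)

theorem exp_relAd_apply {A : Module.End ℚ V} {B : Module.End ℚ W} (hA : IsNilpotent A)
    (hB : IsNilpotent B) (T : V →ₗ[ℚ] W) :
    exp (relAd A B) T = exp B ∘ₗ T ∘ₗ exp (-A) := by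
  rw [relAd, sub_eq_add_neg, ← map_neg, exp_add_of_commute (commute_postcomp_precomp (-A) B)
      (isNilpotent_postcomp hB) (isNilpotent_precomp hA.neg),
    ← map_exp_of_map_pow _ (postcomp_pow B) hB, ← map_exp_of_map_pow _ (precomp_pow (-A)) hA.neg]
  rfl

end LinearMap

namespace DGLA

variable (𝔤 : DGLA)

theorem cst_cst {i j l : ℤ} (h₁ : i = j) (h₂ : j = l) (x : 𝔤.G i) :
    𝔤.cst h₂ (𝔤.cst h₁ x) = 𝔤.cst (h₁.trans h₂) x := by
  subst h₁ h₂; rfl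

theorem d_cst {i j : ℤ} (h : i = j) (x : 𝔤.G i) :
    𝔤.d j (𝔤.cst h x) = 𝔤.cst (congrArg (· + 1) h) (𝔤.d i x) := by
  subst h; rfl

theorem bracket_cst_left {i i' j : ℤ} (h : i = i') (x : 𝔤.G i) (y : 𝔤.G j) :
    𝔤.bracket i' j (𝔤.cst h x) y = 𝔤.cst (congrArg (· + j) h) (𝔤.bracket i j x y) := by
  subst h; rfl

theorem bracket_cst_right {i j j' : ℤ} (h : j = j') (x : 𝔤.G i) (y : 𝔤.G j) :
    𝔤.bracket i j' x (𝔤.cst h y) = 𝔤.cst (congrArg (i + ·) h) (𝔤.bracket i j x y) := by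
  subst h; rfl

def cstₗ {i j : ℤ} (h : i = j) : 𝔤.G i →ₗ[ℚ] 𝔤.G j where
  toFun := 𝔤.cst h
  map_add' _ _ := by subst h; rfl
  map_smul' _ _ := by subst h; rfl

theorem cst_add {i j : ℤ} (h : i = j) (x y : 𝔤.G i) :
    𝔤.cst h (x + y) = 𝔤.cst h x + 𝔤.cst h y :=
  map_add (𝔤.cstₗ h) x y

theorem cst_smul {i j : ℤ} (h : i = j) (c : ℚ) (x : 𝔤.G i) :
    𝔤.cst h (c • x) = c • 𝔤.cst h x :=
  map_smul (𝔤.cstₗ h) c x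

def ad₀ (k : ℤ) : 𝔤.G 0 →ₗ[ℚ] Module.End ℚ (𝔤.G k) :=
  (𝔤.bracket 0 k).compr₂ (𝔤.cstₗ (zero_add k))

def ad₁ (k : ℤ) : 𝔤.G 1 →ₗ[ℚ] 𝔤.G k →ₗ[ℚ] 𝔤.G (k + 1) :=
  (𝔤.bracket 1 k).compr₂ (𝔤.cstₗ (add_comm 1 k))

def twistedD (γ : 𝔤.G 1) (k : ℤ) : 𝔤.G k →ₗ[ℚ] 𝔤.G (k + 1) :=
  𝔤.d k + 𝔤.ad₁ k γ

theorem ad₀_apply (k : ℤ) (X : 𝔤.G 0) (y : 𝔤.G k) :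
    𝔤.ad₀ k X y = 𝔤.cst (zero_add k) (𝔤.bracket 0 k X y) :=
  rfl

theorem ad₁_apply (k : ℤ) (Q : 𝔤.G 1) (y : 𝔤.G k) :
    𝔤.ad₁ k Q y = 𝔤.cst (add_comm 1 k) (𝔤.bracket 1 k Q y) :=
  rfl

theorem opGamma_eq_twistedD (γ : 𝔤.G 1) (k : ℤ) (y : 𝔤.G k) :
    𝔤.opGamma γ k y = 𝔤.twistedD γ k y :=
  rfl

theorem adpow_eq_pow (X : 𝔤.G 0) (n : ℕ) (k : ℤ) (y : 𝔤.G k) :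
    𝔤.adpow X n k y = (𝔤.ad₀ k X ^ n) y := by
  induction n with
  | zero => rfl
  | succ n ih => rw [pow_succ', Module.End.mul_apply, ← ih]; rfl

theorem expAd_eq_exp {N : ℕ} {X : 𝔤.G 0} {k : ℤ} (h : 𝔤.ad₀ k X ^ N = 0) (y : 𝔤.G k) :
    𝔤.expAd N X k y = exp (𝔤.ad₀ k X) y := by
  simp only [expAd, exp_eq_sum h, LinearMap.sum_apply, LinearMap.smul_apply, adpow_eq_pow]

theorem ad₀_comp_ad₁ (X : 𝔤.G 0) (Q : 𝔤.G 1) (k : ℤ) :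
    𝔤.ad₀ (k + 1) X ∘ₗ 𝔤.ad₁ k Q = 𝔤.ad₁ k (𝔤.ad₀ 1 X Q) + 𝔤.ad₁ k Q ∘ₗ 𝔤.ad₀ k X := by
  ext y
  have J : 𝔤.cst (show (0 : ℤ) + (1 + k) = 0 + 1 + k by ring)
        (𝔤.bracket 0 (1 + k) X (𝔤.bracket 1 k Q y))
      = 𝔤.bracket (0 + 1) k (𝔤.bracket 0 1 X Q) y
        + (-1 : ℚ) ^ ((0 : ℤ) * 1) •
          𝔤.cst (show (1 : ℤ) + (0 + k) = 0 + 1 + k by ring)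
            (𝔤.bracket 1 (0 + k) Q (𝔤.bracket 0 k X y)) := 𝔤.jacobi 0 1 k X Q y
  replace J := congrArg (𝔤.cst (show (0 : ℤ) + 1 + k = k + 1 by ring)) J
  simp only [cst_add, cst_smul, cst_cst] at J
  norm_num at J
  simpa only [LinearMap.comp_apply, LinearMap.add_apply, ad₀_apply, ad₁_apply,
    bracket_cst_left, bracket_cst_right, cst_cst] using J

theorem d_comp_ad₀ (X : 𝔤.G 0) (k : ℤ) :
    𝔤.d k ∘ₗ 𝔤.ad₀ k X
      = 𝔤.ad₁ k (𝔤.cst (zero_add 1) (𝔤.d 0 X)) + 𝔤.ad₀ (k + 1) X ∘ₗ 𝔤.d k := by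
  ext y
  have L : 𝔤.d (0 + k) (𝔤.bracket 0 k X y)
      = 𝔤.cst (show (0 : ℤ) + 1 + k = 0 + k + 1 by ring) (𝔤.bracket (0 + 1) k (𝔤.d 0 X) y)
        + (-1 : ℚ) ^ (0 : ℤ) •
          𝔤.cst (show (0 : ℤ) + (k + 1) = 0 + k + 1 by ring)
            (𝔤.bracket 0 (k + 1) X (𝔤.d k y)) := 𝔤.leibniz 0 k X y
  replace L := congrArg (𝔤.cst (show (0 : ℤ) + k + 1 = k + 1 by ring)) L
  simp only [cst_add, cst_smul, cst_cst] at L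
  norm_num at L
  simpa only [LinearMap.comp_apply, LinearMap.add_apply, ad₀_apply, ad₁_apply,
    bracket_cst_left, d_cst, cst_cst] using L

theorem cst_bracket_one_zero (γ : 𝔤.G 1) (X : 𝔤.G 0) :
    𝔤.cst (add_zero 1) (𝔤.bracket 1 0 γ X) = -𝔤.ad₀ 1 X γ := by
  have A : 𝔤.bracket 1 0 γ X
      = (-((-1 : ℚ) ^ ((1 : ℤ) * 0))) •
          𝔤.cst (show (0 : ℤ) + 1 = 1 + 0 by ring) (𝔤.bracket 0 1 X γ) := 𝔤.antisymm 1 0 γ X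
  replace A := congrArg (𝔤.cst (add_zero 1)) A
  simp only [cst_smul, cst_cst] at A
  norm_num at A
  simpa only [ad₀_apply] using A

def gaugeTerm (X : 𝔤.G 0) (γ : 𝔤.G 1) : 𝔤.G 1 :=
  𝔤.cst (zero_add 1) (𝔤.d 0 X) + 𝔤.cst (add_zero 1) (𝔤.bracket 1 0 γ X)

theorem gaugeAct_eq (N : ℕ) (X : 𝔤.G 0) (γ : 𝔤.G 1) :
    𝔤.gaugeAct N X γ
      = γ - ∑ i ∈ Finset.range N,
          ((i + 1).factorial : ℚ)⁻¹ • (𝔤.ad₀ 1 X ^ i) (𝔤.gaugeTerm X γ) := by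
  simp only [gaugeAct, adpow_eq_pow]
  rfl

theorem relAd_ad₁ (X : 𝔤.G 0) (Q : 𝔤.G 1) (k : ℤ) :
    LinearMap.relAd (𝔤.ad₀ k X) (𝔤.ad₀ (k + 1) X) (𝔤.ad₁ k Q) = 𝔤.ad₁ k (𝔤.ad₀ 1 X Q) := by
  rw [LinearMap.relAd_apply, ad₀_comp_ad₁, add_sub_cancel_right]

theorem relAd_twistedD (X : 𝔤.G 0) (γ : 𝔤.G 1) (k : ℤ) :
    LinearMap.relAd (𝔤.ad₀ k X) (𝔤.ad₀ (k + 1) X) (𝔤.twistedD γ k)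
      = -𝔤.ad₁ k (𝔤.gaugeTerm X γ) := by
  rw [LinearMap.relAd_apply, twistedD, LinearMap.comp_add, LinearMap.add_comp, ad₀_comp_ad₁,
    d_comp_ad₀, gaugeTerm, cst_bracket_one_zero, map_add, map_neg]
  abel

theorem relAd_pow_succ_twistedD (X : 𝔤.G 0) (γ : 𝔤.G 1) (k : ℤ) (i : ℕ) :
    (LinearMap.relAd (𝔤.ad₀ k X) (𝔤.ad₀ (k + 1) X) ^ (i + 1)) (𝔤.twistedD γ k)
      = -𝔤.ad₁ k ((𝔤.ad₀ 1 X ^ i) (𝔤.gaugeTerm X γ)) := by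
  induction i with
  | zero => rw [zero_add, pow_one, relAd_twistedD, pow_zero, Module.End.one_apply]
  | succ i ih =>
    rw [pow_succ', Module.End.mul_apply, ih, map_neg, relAd_ad₁, pow_succ',
      Module.End.mul_apply]

theorem twistedD_gaugeAct {N : ℕ} {X : 𝔤.G 0} (hX : ∀ k, 𝔤.ad₀ k X ^ N = 0) (γ : 𝔤.G 1)
    (k : ℤ) :
    𝔤.twistedD (𝔤.gaugeAct N X γ) k
      = exp (LinearMap.relAd (𝔤.ad₀ k X) (𝔤.ad₀ (k + 1) X)) (𝔤.twistedD γ k) := by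
  have hvanish : (LinearMap.relAd (𝔤.ad₀ k X) (𝔤.ad₀ (k + 1) X) ^ (N + 1)) (𝔤.twistedD γ k)
      = 0 := by
    rw [relAd_pow_succ_twistedD, hX, LinearMap.zero_apply, map_zero, neg_zero]
  rw [← Module.End.smul_def, exp_smul_eq_sum (m := 𝔤.twistedD γ k) hvanish
      (LinearMap.isNilpotent_relAd ⟨N, hX k⟩ ⟨N, hX (k + 1)⟩), Finset.sum_range_succ']
  simp only [Module.End.smul_def, relAd_pow_succ_twistedD, smul_neg, Finset.sum_neg_distrib,
    pow_zero, Nat.factorial_zero, Nat.cast_one, inv_one, one_smul]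
  rw [gaugeAct_eq, twistedD, twistedD, map_sub, map_sum]
  simp only [map_smul]
  abel

end DGLA

theorem gauge_conjugates_twisted_differential_general (𝔤 : DGLA) (N : ℕ) (X : 𝔤.G 0)
    (hnil : ∀ (k : ℤ) (y : 𝔤.G k), 𝔤.adpow X N k y = 0)
    (γ₁ γ₂ : 𝔤.G 1)
    (hg : γ₂ = 𝔤.gaugeAct N X γ₁) :
    ∀ (k : ℤ) (y : 𝔤.G k),
      𝔤.opGamma γ₂ k y
        = 𝔤.expAd N X (k + 1) (𝔤.opGamma γ₁ k (𝔤.expAd N (-X) k y)) := by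
  have hX : ∀ k, 𝔤.ad₀ k X ^ N = 0 := fun k ↦
    LinearMap.ext fun y ↦ by rw [← DGLA.adpow_eq_pow, hnil, LinearMap.zero_apply]
  have hnegX : ∀ k, 𝔤.ad₀ k (-X) ^ N = 0 := fun k ↦ by
    rw [map_neg, neg_pow, hX, mul_zero]
  intro k y
  rw [DGLA.opGamma_eq_twistedD, hg, DGLA.twistedD_gaugeAct 𝔤 hX,
    LinearMap.exp_relAd_apply ⟨N, hX k⟩ ⟨N, hX (k + 1)⟩, DGLA.expAd_eq_exp 𝔤 (hX (k + 1)),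
    DGLA.expAd_eq_exp 𝔤 (hnegX k), map_neg]
  rfl

/-- **Gauge equivalences conjugate the twisted differential.** If `γ₁, γ₂` are
Maurer-Cartan elements of a DGLA `𝔤` with `γ₂ = (exp X)·γ₁` for a (nilpotent)
`X ∈ 𝔤⁰`, then `δ + ad(γ₂) = e^{ad X} ∘ (δ + ad(γ₁)) ∘ e^{−ad X}` as operators
on `𝔤`. -/
theorem gauge_conjugates_twisted_differential (𝔤 : DGLA) (N : ℕ) (X : 𝔤.G 0)
    (hnil : ∀ (k : ℤ) (y : 𝔤.G k), 𝔤.adpow X N k y = 0)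
    (γ₁ γ₂ : 𝔤.G 1) (h1 : 𝔤.curv γ₁ = 0) (h2 : 𝔤.curv γ₂ = 0)
    (hg : γ₂ = 𝔤.gaugeAct N X γ₁) :
    ∀ (k : ℤ) (y : 𝔤.G k),
      𝔤.opGamma γ₂ k y
        = 𝔤.expAd N X (k + 1) (𝔤.opGamma γ₁ k (𝔤.expAd N (-X) k y)) :=
  gauge_conjugates_twisted_differential_general 𝔤 N X hnil γ₁ γ₂ hg
end

section
/- Let M be a manifold (or replace by an interval with parameters), L a vector bundle with connection ∇, and let Hol^t_a denote the holonomy along the t-direction on M × I, defined as the unique solution of ∇_{∂_t}(Hol^t_a) = 0 with initial condition Hol^t_a|_{t=a} = Id. Then for any vector field ξ on M (lifted to M × I), the logarithmic covariant derivative satisfies ∇_ξ(Hol^t_a) ∘ (Hol^t_a)⁻¹ = ∫_a^t (Hol^t_s)⁻¹ (ι_ξ R) ds, where R = ∇² is the curvature. Equivalently, both sides solve the initial value problem ∇_{∂_t}Φ = ι_{∂_t}ι_ξ R, Φ|_{t=a} = 0. -/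
/-!
Differentiating `Φ = (∂ₛHol + As·Hol − Hol·As(·,a))·Hol⁻¹` in `t` uses `∂ₜHol = −At·Hol`,
hence `∂ₜHol⁻¹ = Hol⁻¹·At`, and the symmetry `∂ₜ∂ₛHol = ∂ₛ(−At·Hol)`; every term containing `Hol`
or `∂ₛHol` then cancels against `[At, Φ]`, leaving `∂ₜAs − ∂ₛAt + [At, As]`. At `t = a` the
holonomy is identically `1` in `s`, so `∂ₛHol` and with it `Φ` vanish there.
-/

open Filter Topology

theorem sub_eq_mul_sub_mul_of_mul_eq_one {R : Type*} [Ring R] {a a' b b' : R}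
    (ha : a * a' = 1) (hb : b' * b = 1) : b' - a' = b' * (a - b) * a' := by
  rw [mul_sub, sub_mul, mul_assoc, ha, mul_one, hb, one_mul]

theorem ContinuousAt.inverse_of_mul_eq_one {X B : Type*} [TopologicalSpace X] [NormedRing B]
    {f g : X → B} {t : X} (hf : ContinuousAt f t) (h : ∀ x, f x * g x = 1 ∧ g x * f x = 1) :
    ContinuousAt g t := by
  set u := fun x => ‖f t - f x‖ * ‖g t‖
  have hdist : ∀ x, ‖g x - g t‖ ≤ ‖g x‖ * u x := fun x => by
    rw [sub_eq_mul_sub_mul_of_mul_eq_one (h t).1 (h x).2, mul_assoc]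
    exact (norm_mul_le _ _).trans (by gcongr; exact norm_mul_le _ _)
  have hu : Tendsto u (𝓝 t) (𝓝 0) := by
    have : Tendsto (fun x => f t - f x) (𝓝 t) (𝓝 0) := by
      simpa using (tendsto_const_nhds (x := f t)).sub hf
    simpa [u] using this.norm.mul_const ‖g t‖
  -- locally `u ≤ 1/2`, so `‖g x‖ ≤ ‖g t‖ + ‖g x‖ / 2` bounds `g` near `t`
  have hbound : ∀ᶠ x in 𝓝 t, ‖g x‖ ≤ 2 * ‖g t‖ := by
    filter_upwards [hu.eventually_le_const (by norm_num : (0:ℝ) < 1/2)] with x hx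
    have := norm_le_norm_add_norm_sub' (g x) (g t)
    nlinarith [hdist x, norm_nonneg (g x)]
  rw [ContinuousAt, tendsto_iff_norm_sub_tendsto_zero]
  refine squeeze_zero' (Eventually.of_forall fun x => norm_nonneg _) ?_
    (by simpa using hu.const_mul (2 * ‖g t‖))
  filter_upwards [hbound] with x hx
  exact (hdist x).trans (mul_le_mul_of_nonneg_right hx (by positivity))

-- Unlike `hasFDerivAt_ring_inverse`, this needs no completeness of `B`.
theorem HasDerivAt.inverse_of_mul_eq_one {𝕜 B : Type*} [NontriviallyNormedField 𝕜] [NormedRing B]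
    [NormedAlgebra 𝕜 B] {f g : 𝕜 → B} {f' : B} {t : 𝕜}
    (hf : HasDerivAt f f' t) (h : ∀ x, f x * g x = 1 ∧ g x * f x = 1) :
    HasDerivAt g (-(g t * f' * g t)) t := by
  have hslope : ∀ x, slope g t x = -(g x * slope f t x * g t) := fun x => by
    rw [slope_def_module, slope_def_module, sub_eq_mul_sub_mul_of_mul_eq_one (h t).1 (h x).2,
      ← neg_sub (f x) (f t), mul_neg, neg_mul, smul_neg, mul_smul_comm, smul_mul_assoc]
  rw [hasDerivAt_iff_tendsto_slope, funext hslope]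
  have hg : Tendsto g (𝓝[≠] t) (𝓝 (g t)) :=
    (hf.continuousAt.inverse_of_mul_eq_one h).tendsto.mono_left nhdsWithin_le_nhds
  exact ((hg.mul (hasDerivAt_iff_tendsto_slope.mp hf)).mul_const (g t)).neg

/-- **Logarithmic covariant derivative of holonomy.** Work over `M × I` with
`M = ℝ` (coordinate `s`, vector field `ξ = ∂_s`) and `I` the `t`-line, with a
connection `∇ = d + A` (with components `At`, `As`) on the trivial bundle with
fiber a normed algebra `B` (playing the role of nilpotent endomorphisms `E_L`).
Let `Hol = Hol^t_a` be the holonomy along `t`, the solution of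
`∇_{∂_t} Hol = 0`, `Hol|_{t=a} = Id`, with pointwise inverse `HolInv`.  Then
`Φ := ∇_ξ(Hol) ∘ Hol⁻¹` (where `∇_ξ Hol = ∂_s Hol + As·Hol − Hol·As(·,a)` is
the covariant derivative in the bundle `Hom(L_a, L)`) solves the initial value
problem `∇_{∂_t} Φ = ι_{∂_t} ι_ξ R`, `Φ|_{t=a} = 0`, where
`R(∂_t,∂_s) = ∂_t As − ∂_s At + [At, As]` is the curvature of `∇`; this is the
characterization of `∇_ξ(Hol^t_a)(Hol^t_a)⁻¹ = ∫_a^t (Hol^t_s)⁻¹(ι_ξ R)`. -/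
theorem holonomy_log_covariant_derivative
    (B : Type) [NormedRing B] [NormedAlgebra ℝ B]
    (a : ℝ)
    (At As Hol HolInv DsHol DtAs DsAt DtDsHol : ℝ → ℝ → B)
    -- `Hol` solves `∇_{∂_t} Hol = 0` with `Hol|_{t=a} = 1`, and is invertible
    (hHolODE : ∀ s t, HasDerivAt (fun t' => Hol s t') (-(At s t * Hol s t)) t)
    (hHolInit : ∀ s, Hol s a = 1)
    (hInv : ∀ s t, Hol s t * HolInv s t = 1 ∧ HolInv s t * Hol s t = 1)
    -- partial derivatives
    (hDsHol : ∀ s t, HasDerivAt (fun s' => Hol s' t) (DsHol s t) s)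
    (hDtAs : ∀ s t, HasDerivAt (fun t' => As s t') (DtAs s t) t)
    (hDsAt : ∀ s t, HasDerivAt (fun s' => At s' t) (DsAt s t) s)
    -- equality of the mixed partial derivatives of `Hol`
    (hMix : ∀ s t, HasDerivAt (fun t' => DsHol s t') (DtDsHol s t) t ∧
        HasDerivAt (fun s' => -(At s' t * Hol s' t)) (DtDsHol s t) s) :
    ∀ s t,
      -- `Φ|_{t=a} = 0`
      ((DsHol s a + As s a * Hol s a - Hol s a * As s a) * HolInv s a = 0) ∧
      -- `∂_t Φ + [At, Φ] = ι_{∂_t} ι_ξ R`, i.e. `∇_{∂_t} Φ = ι_{∂_t} ι_ξ R`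
      HasDerivAt
        (fun t' => (DsHol s t' + As s t' * Hol s t' - Hol s t' * As s a) * HolInv s t')
        ((DtAs s t - DsAt s t + (At s t * As s t - As s t * At s t))
          - (At s t * ((DsHol s t + As s t * Hol s t - Hol s t * As s a) * HolInv s t)
             - ((DsHol s t + As s t * Hol s t - Hol s t * As s a) * HolInv s t) * At s t))
        t := by
  intro s t
  have hHolHolInv := (hInv s t).1
  have hDsHol_init : DsHol s a = 0 :=
    (hDsHol s a).unique (by simpa only [hHolInit] using hasDerivAt_const s (1 : B))
  refine ⟨by simp [hDsHol_init, hHolInit], ?_⟩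
  have hDtDsHol : DtDsHol s t = -(DsAt s t * Hol s t + At s t * DsHol s t) :=
    (hMix s t).2.unique ((hDsAt s t).mul (hDsHol s t)).neg
  have hHolInv : HasDerivAt (fun t' => HolInv s t') (HolInv s t * At s t) t := by
    convert (hHolODE s t).inverse_of_mul_eq_one (hInv s) using 1
    rw [mul_neg, neg_mul, neg_neg, mul_assoc, mul_assoc, hHolHolInv, mul_one]
  have hN := ((hMix s t).1.add ((hDtAs s t).mul (hHolODE s t))).sub
    ((hHolODE s t).mul_const (As s a))
  refine (hN.mul hHolInv).congr_deriv ?_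
  have hcancel : ∀ y, Hol s t * (HolInv s t * y) = y := fun y => by
    rw [← mul_assoc, hHolHolInv, one_mul]
  rw [hDtDsHol]
  simp only [Pi.add_apply, Pi.mul_apply, Pi.sub_apply, mul_sub, sub_mul, mul_add, add_mul,
    mul_neg, neg_mul, mul_assoc, hHolHolInv, hcancel, mul_one]
  abel
end
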